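/- arXiv:1301.3671 — 4 statements merged into one kernel-verified Lean document; each statement's English description precedes it below -/
import Mathlib

section
/- Let v ≥ 2 and let X ⊆ ℤ/vℤ. Define the sequence a_X = (a₀, …, a_{v−1}) of ±1 values by a_i = −1 if i ∈ X and a_i = 1 otherwise, and let [X] denote the v × v circulant matrix whose first row is a_X. If X, Y, Z, W ⊆ ℤ/vℤ form supplementary difference sets with parameters (v; x, y, z, w; λ) where λ = x + y + z + w − v, then [X][X]ᵀ + [Y][Y]ᵀ + [Z][Z]ᵀ + [W][W]ᵀ = 4v·I_v, where I_v is the v × v identity matrix. -/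
/-!
Row `i` of `[X]` is `k ↦ 1 - 2·[k - i ∈ X]`, so expanding the product of rows `i` and `j`
gives `([X][X]ᵀ)ᵢⱼ = v - 4|X| + 4 d_X(j - i)`, where `d_X(c)` counts the pairs of `X` with
difference `c`. On the diagonal `d_X(0) = |X|`, so the four Gram matrices contribute `4v`; off
the diagonal the SDS condition gives `Σ d = λ = x + y + z + w - v`, and everything cancels.
-/

open Matrix

/-- `X 1, …, X t ⊆ ℤ/vℤ` are supplementary difference sets with parameters
`(v; k 1, …, k t; lam)`. -/
def IsSDS {v t : ℕ} (X : Fin t → Finset (ZMod v)) (k : Fin t → ℕ) (lam : ℕ) : Prop :=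
  (∀ i, (X i).card = k i) ∧
  ∀ c : ZMod v, c ≠ 0 →
    (∑ i, ((X i ×ˢ X i).filter fun p => p.1 - p.2 = c).card) = lam

/-- The `v × v` circulant `±1` matrix `[X]` whose first row has entry `-1` in
position `j` if `j ∈ X` and `+1` otherwise, each subsequent row being the cyclic
shift of the previous one. -/
def circMat {v : ℕ} (X : Finset (ZMod v)) : Matrix (ZMod v) (ZMod v) ℤ :=
  Matrix.of fun i j => if j - i ∈ X then -1 else 1

open Finset

section DiffCount

variable {G : Type*} [DecidableEq G]

def diffCount [AddGroup G] (X : Finset G) (c : G) : ℕ :=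
  #{p ∈ X ×ˢ X | p.1 - p.2 = c}

theorem diffCount_zero [AddGroup G] (X : Finset G) : diffCount X 0 = #X := by
  refine card_nbij' Prod.fst (fun a => (a, a)) ?_ ?_ ?_ ?_
  · intro p hp
    exact (mem_product.mp (mem_filter.mp hp).1).1
  · intro a ha
    simp [mem_coe.mp ha]
  · rintro ⟨a, b⟩ hp
    have hab : a - b = 0 := (mem_filter.mp hp).2
    simp [sub_eq_zero.mp hab]
  · intro a _
    rfl

variable [Fintype G]

theorem card_filter_sub_mem [AddGroup G] (X : Finset G) (i : G) : #{k | k - i ∈ X} = #X :=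
  card_equiv (Equiv.subRight i) (by simp)

theorem card_filter_sub_mem_and_sub_mem [AddCommGroup G] (X : Finset G) (i j : G) :
    #{k | k - i ∈ X ∧ k - j ∈ X} = diffCount X (j - i) := by
  have hsnd : ∀ a b : G, a - b = j - i → a + i - j = b := by
    intro a b hab
    rw [← sub_sub_cancel a b, hab]
    abel
  refine card_nbij' (fun k => (k - i, k - j)) (fun p => p.1 + i) ?_ ?_ ?_ ?_
  · intro k hk
    simp only [coe_filter, Set.mem_ofPred_eq, mem_univ, true_and] at hk
    simp [hk]
  · rintro ⟨a, b⟩ hp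
    simp only [coe_filter, mem_product, Set.mem_ofPred_eq] at hp
    obtain ⟨⟨ha, hb⟩, hab⟩ := hp
    simp [ha, hsnd a b hab, hb]
  · intro k _
    simp
  · rintro ⟨a, b⟩ hp
    simp [hsnd a b (mem_filter.mp hp).2]

end DiffCount

theorem circMat_mul_transpose_apply {v : ℕ} [NeZero v] (X : Finset (ZMod v)) (i j : ZMod v) :
    (circMat X * (circMat X)ᵀ) i j = v - 4 * #X + 4 * diffCount X (j - i) := by
  have hentry : ∀ k, circMat X i k * (circMat X)ᵀ k j
      = 1 - 2 * (if k - i ∈ X then 1 else 0) - 2 * (if k - j ∈ X then 1 else 0)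
          + 4 * (if k - i ∈ X ∧ k - j ∈ X then 1 else 0) := by
    intro k
    simp only [circMat, transpose_apply, of_apply]
    by_cases hi : k - i ∈ X <;> by_cases hj : k - j ∈ X <;> simp [hi, hj]
  simp only [mul_apply, hentry, sum_add_distrib, sum_sub_distrib, ← mul_sum, sum_boole,
    card_filter_sub_mem, card_filter_sub_mem_and_sub_mem, sum_const, card_univ, ZMod.card]
  ring

theorem stmt2_general {v : ℕ} [NeZero v] (X Y Z W : Finset (ZMod v))
    (x y z w lam : ℕ) (hlam : (lam : ℤ) = (x : ℤ) + y + z + w - v)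
    (h : IsSDS ![X, Y, Z, W] ![x, y, z, w] lam) :
    circMat X * (circMat X)ᵀ + circMat Y * (circMat Y)ᵀ +
      circMat Z * (circMat Z)ᵀ + circMat W * (circMat W)ᵀ =
      (4 * v : ℤ) • (1 : Matrix (ZMod v) (ZMod v) ℤ) := by
  obtain ⟨hcard, hdiff⟩ := h
  have hX : #X = x := hcard 0
  have hY : #Y = y := hcard 1
  have hZ : #Z = z := hcard 2
  have hW : #W = w := hcard 3
  subst hX hY hZ hW
  ext i j
  simp only [Matrix.add_apply, Matrix.smul_apply, one_apply, smul_eq_mul,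
    circMat_mul_transpose_apply]
  by_cases hij : i = j
  · subst hij
    simp only [sub_self, diffCount_zero, if_true]
    ring
  · have hsum : (diffCount X (j - i) + diffCount Y (j - i) + diffCount Z (j - i)
        + diffCount W (j - i) : ℤ) = lam := by
      exact_mod_cast by
        simpa [Fin.sum_univ_four, diffCount] using hdiff (j - i) (sub_ne_zero.mpr (Ne.symm hij))
    rw [if_neg hij]
    linear_combination 4 * hsum + 4 * hlam

theorem stmt2 {v : ℕ} [NeZero v] (hv : 2 ≤ v) (X Y Z W : Finset (ZMod v))
    (x y z w lam : ℕ) (hlam : (lam : ℤ) = (x : ℤ) + y + z + w - v)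
    (h : IsSDS ![X, Y, Z, W] ![x, y, z, w] lam) :
    circMat X * (circMat X)ᵀ + circMat Y * (circMat Y)ᵀ +
      circMat Z * (circMat Z)ᵀ + circMat W * (circMat W)ᵀ =
      (4 * v : ℤ) • (1 : Matrix (ZMod v) (ZMod v) ℤ) :=
  stmt2_general X Y Z W x y z w lam hlam h
end

section
/- Let v ≥ 1 and let P₁, P₂, P₃, P₄ be v × v circulant matrices with entries in {+1, −1} satisfying P₁P₁ᵀ + P₂P₂ᵀ + P₃P₃ᵀ + P₄P₄ᵀ = 4v·I_v. Let R be the v × v matrix with ones on the back-diagonal (R_{ij} = 1 if i + j ≡ v − 1, and 0 otherwise). Then the 4v × 4v block matrix H = [[P₁, P₂R, P₃R, P₄R], [−P₂R, P₁, −P₄ᵀR, P₃ᵀR], [−P₃R, P₄ᵀR, P₁, −P₂ᵀR], [−P₄R, −P₃ᵀR, P₂ᵀR, P₁]] (the Goethals–Seidel array) is a Hadamard matrix of order 4v, i.e., all entries of H are ±1 and H·Hᵀ = 4v·I_{4v}. -/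
/-!
Circulant matrices over an abelian group commute with each other and with their transposes, and
for a circulant `X` and the reversal `R` the product `X R` is symmetric, i.e. `X R = R Xᵀ`, while
`R² = 1`. Moving every `R` to the left turns each block of `H Hᵀ` into `R f + g` with `f` and `g`
sums of products of circulants; off the diagonal the terms cancel in pairs by commutativity, and
on the diagonal what remains is `∑ Pᵢ Pᵢᵀ = 4v I`.
-/

open Matrix

/-- The 4×4 array of `v × v` blocks of the Goethals–Seidel array
`[[P₁, P₂R, P₃R, P₄R], [−P₂R, P₁, −P₄ᵀR, P₃ᵀR],
  [−P₃R, P₄ᵀR, P₁, −P₂ᵀR], [−P₄R, −P₃ᵀR, P₂ᵀR, P₁]]`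
(here `P 0, P 1, P 2, P 3` play the roles of `P₁, P₂, P₃, P₄`). -/
def GSblock {v : ℕ} [NeZero v] (P : Fin 4 → Matrix (ZMod v) (ZMod v) ℤ)
    (R : Matrix (ZMod v) (ZMod v) ℤ) : Fin 4 → Fin 4 → Matrix (ZMod v) (ZMod v) ℤ
  | 0, 0 => P 0
  | 0, 1 => P 1 * R
  | 0, 2 => P 2 * R
  | 0, 3 => P 3 * R
  | 1, 0 => -(P 1 * R)
  | 1, 1 => P 0
  | 1, 2 => -((P 3)ᵀ * R)
  | 1, 3 => (P 2)ᵀ * R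
  | 2, 0 => -(P 2 * R)
  | 2, 1 => (P 3)ᵀ * R
  | 2, 2 => P 0
  | 2, 3 => -((P 1)ᵀ * R)
  | 3, 0 => -(P 3 * R)
  | 3, 1 => -((P 2)ᵀ * R)
  | 3, 2 => (P 1)ᵀ * R
  | 3, 3 => P 0

/-- The Goethals–Seidel array as a `4v × 4v` matrix, indexed by `Fin 4 × ZMod v`. -/
def GSmatrix {v : ℕ} [NeZero v] (P : Fin 4 → Matrix (ZMod v) (ZMod v) ℤ)
    (R : Matrix (ZMod v) (ZMod v) ℤ) :
    Matrix (Fin 4 × ZMod v) (Fin 4 × ZMod v) ℤ :=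
  Matrix.of fun p q => GSblock P R p.1 q.1 p.2 q.2

namespace Matrix

variable {m n G α : Type*}

def IsCirculant [Sub G] (M : Matrix G G α) : Prop := ∃ c, M = circulant c

def IsPlusMinusOne [One α] [Neg α] (M : Matrix m n α) : Prop :=
  ∀ i j, M i j = 1 ∨ M i j = -1

def reversal [Add G] [DecidableEq G] [Zero α] [One α] (c : G) : Matrix G G α :=
  of fun i j => if i + j = c then 1 else 0

theorem IsPlusMinusOne.neg [One α] [InvolutiveNeg α] {M : Matrix m n α}
    (hM : IsPlusMinusOne M) : IsPlusMinusOne (-M) := fun i j => by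
  rcases hM i j with h | h <;> simp [h]

theorem IsPlusMinusOne.transpose [One α] [Neg α] {M : Matrix m n α}
    (hM : IsPlusMinusOne M) : IsPlusMinusOne Mᵀ :=
  fun i j => hM j i

section Circulant

variable [AddCommGroup G] {M N : Matrix G G α}

theorem IsCirculant.transpose (hM : IsCirculant M) : IsCirculant Mᵀ := by
  obtain ⟨c, rfl⟩ := hM
  exact ⟨_, transpose_circulant c⟩

theorem IsCirculant.mul_comm [Fintype G] [CommSemiring α] (hM : IsCirculant M)
    (hN : IsCirculant N) : M * N = N * M := by
  obtain ⟨c, rfl⟩ := hM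
  obtain ⟨d, rfl⟩ := hN
  exact circulant_mul_comm c d

end Circulant

section Reversal

variable [AddCommGroup G] [DecidableEq G] (c : G)

@[simp]
theorem transpose_reversal [Zero α] [One α] : (reversal c : Matrix G G α)ᵀ = reversal c := by
  ext a b
  simp [reversal, add_comm]

variable [Fintype G]

theorem mul_reversal_apply [NonAssocSemiring α] (M : Matrix G G α) (a b : G) :
    (M * reversal c : Matrix G G α) a b = M a (c - b) := by
  rw [mul_apply, Finset.sum_eq_single (c - b)]
  · simp [reversal]
  · intro k _ hk
    simp only [reversal, of_apply, mul_ite, mul_one, mul_zero, ite_eq_right_iff]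
    exact fun h => absurd (eq_sub_of_add_eq h) hk
  · simp

@[simp]
theorem reversal_mul_reversal [NonAssocSemiring α] :
    (reversal c : Matrix G G α) * reversal c = 1 := by
  ext a b
  rw [mul_reversal_apply, reversal, of_apply, one_apply, show a + (c - b) = c + (a - b) by abel]
  simp only [add_eq_left, sub_eq_zero]

theorem reversal_mul_reversal_mul [Semiring α] (N : Matrix G G α) :
    reversal c * (reversal c * N) = N := by
  rw [← Matrix.mul_assoc, reversal_mul_reversal, Matrix.one_mul]

theorem IsPlusMinusOne.mul_reversal [NonAssocRing α] {M : Matrix G G α}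
    (hM : IsPlusMinusOne M) : IsPlusMinusOne (M * reversal c) := fun a b => by
  rw [mul_reversal_apply]
  exact hM a (c - b)

theorem IsCirculant.mul_reversal [CommSemiring α] {M : Matrix G G α} (hM : IsCirculant M) :
    M * reversal c = reversal c * Mᵀ := by
  have hsymm : (M * reversal c)ᵀ = M * reversal c := by
    obtain ⟨d, rfl⟩ := hM
    ext a b
    simp only [transpose_apply, mul_reversal_apply, circulant_apply]
    rw [show b - (c - a) = a - (c - b) by abel]
  rw [← hsymm, transpose_mul, transpose_reversal]

theorem IsCirculant.mul_reversal_mul [CommSemiring α] {M : Matrix G G α} (hM : IsCirculant M)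
    (N : Matrix G G α) :
    M * (reversal c * N) = reversal c * (Mᵀ * N) := by
  rw [← Matrix.mul_assoc, hM.mul_reversal, Matrix.mul_assoc]

end Reversal

end Matrix

section GoethalsSeidel

variable {v : ℕ} [NeZero v] {P : Fin 4 → Matrix (ZMod v) (ZMod v) ℤ}

theorem GSblock_isPlusMinusOne (hP : ∀ i, IsPlusMinusOne (P i)) (c : ZMod v) (p q : Fin 4) :
    IsPlusMinusOne (GSblock P (reversal c) p q) := by
  fin_cases p <;> fin_cases q <;> simp only [GSblock] <;>
    apply_rules [IsPlusMinusOne.neg, IsPlusMinusOne.mul_reversal, IsPlusMinusOne.transpose]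

theorem GSblock_sum_mul_transpose (hP : ∀ i, IsCirculant (P i)) (c : ZMod v) (p q : Fin 4) :
    ∑ k, GSblock P (reversal c) p k * (GSblock P (reversal c) q k)ᵀ =
      if p = q then ∑ i, P i * (P i)ᵀ else 0 := by
  -- `IsCirculant.mul_comm` is a permutative rewrite, so `simp` sorts the circulant factors of
  -- every product once the `reversal c` have been moved to the left.
  fin_cases p <;> fin_cases q <;>
    simp only [GSblock, Fin.sum_univ_four, Fin.isValue, reduceIte, transpose_mul,
      transpose_neg, transpose_transpose, transpose_reversal, neg_mul, mul_neg, neg_neg,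
      Matrix.mul_assoc, reversal_mul_reversal_mul, IsCirculant.mul_reversal_mul,
      IsCirculant.mul_reversal, IsCirculant.mul_comm, IsCirculant.transpose, hP] <;> abel

theorem GSmatrix_mul_transpose_apply (R : Matrix (ZMod v) (ZMod v) ℤ) (i j : Fin 4)
    (a b : ZMod v) :
    (GSmatrix P R * (GSmatrix P R)ᵀ) (i, a) (j, b) =
      (∑ k, GSblock P R i k * (GSblock P R j k)ᵀ) a b := by
  simp only [mul_apply, Fintype.sum_prod_type, Matrix.sum_apply]
  rfl

end GoethalsSeidel

theorem stmt3_general {v : ℕ} [NeZero v]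
    (P : Fin 4 → Matrix (ZMod v) (ZMod v) ℤ)
    (hcirc : ∀ i, ∃ c : ZMod v → ℤ, P i = Matrix.circulant c)
    (hpm : ∀ i a b, P i a b = 1 ∨ P i a b = -1)
    (hsum : P 0 * (P 0)ᵀ + P 1 * (P 1)ᵀ + P 2 * (P 2)ᵀ + P 3 * (P 3)ᵀ =
      (4 * v : ℤ) • (1 : Matrix (ZMod v) (ZMod v) ℤ))
    (R : Matrix (ZMod v) (ZMod v) ℤ)
    (hR : ∀ i j : ZMod v, R i j = if i + j = (v : ZMod v) - 1 then 1 else 0) :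
    (∀ p q, GSmatrix P R p q = 1 ∨ GSmatrix P R p q = -1) ∧
      GSmatrix P R * (GSmatrix P R)ᵀ =
        (4 * v : ℤ) • (1 : Matrix (Fin 4 × ZMod v) (Fin 4 × ZMod v) ℤ) := by
  obtain rfl : R = reversal ((v : ZMod v) - 1) := ext hR
  refine ⟨fun p q => GSblock_isPlusMinusOne hpm _ p.1 q.1 p.2 q.2, ?_⟩
  ext ⟨i, a⟩ ⟨j, b⟩
  rw [GSmatrix_mul_transpose_apply, GSblock_sum_mul_transpose hcirc, Fin.sum_univ_four, hsum]
  by_cases h : i = j <;> simp [h, one_apply]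

theorem stmt3 {v : ℕ} [NeZero v] (hv : 1 ≤ v)
    (P : Fin 4 → Matrix (ZMod v) (ZMod v) ℤ)
    (hcirc : ∀ i, ∃ c : ZMod v → ℤ, P i = Matrix.circulant c)
    (hpm : ∀ i a b, P i a b = 1 ∨ P i a b = -1)
    (hsum : P 0 * (P 0)ᵀ + P 1 * (P 1)ᵀ + P 2 * (P 2)ᵀ + P 3 * (P 3)ᵀ =
      (4 * v : ℤ) • (1 : Matrix (ZMod v) (ZMod v) ℤ))
    (R : Matrix (ZMod v) (ZMod v) ℤ)
    (hR : ∀ i j : ZMod v, R i j = if i + j = (v : ZMod v) - 1 then 1 else 0) :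
    (∀ p q, GSmatrix P R p q = 1 ∨ GSmatrix P R p q = -1) ∧
      GSmatrix P R * (GSmatrix P R)ᵀ =
        (4 * v : ℤ) • (1 : Matrix (Fin 4 × ZMod v) (Fin 4 × ZMod v) ℤ) :=
  stmt3_general P hcirc hpm hsum R hR
end

section
/- Let v ≥ 1 and suppose there exist subsets X₁, X₂, X₃, X₄ of ℤ/vℤ forming supplementary difference sets with parameters (v; k₁, k₂, k₃, k₄; λ) where λ = k₁ + k₂ + k₃ + k₄ − v. Then there exists a Hadamard matrix of order 4v. -/
open Matrix

/-!
Write `a t = 1 - 2·𝟙_{X t}`. The defining property of the supplementary difference sets, together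
with `λ = k₁ + k₂ + k₃ + k₄ - v`, says exactly that the periodic autocorrelations of the four
`±1`-sequences `a t` add up to `4v` at shift `0` and to `0` at every other shift, i.e.
`∑ t, A t * (A t)ᵀ = 4v • 1` for the circulant matrices `A t` of the `a t`.
Plugging `A 0` and back-circulant versions of `a 1, a 2, a 3` into the Goethals–Seidel array gives a
`±1` matrix `H` of order `4v` with `H * Hᵀ = 4v • 1`: circulant matrices commute, and the
back-circulant blocks are arranged so that all off-diagonal block products cancel in pairs.
-/

open Finset

namespace Matrix

variable {n α : Type*}

def backCirculant [Add n] (v : n → α) : Matrix n n α :=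
  of fun i j => v (i + j)

theorem backCirculant_apply [Add n] (v : n → α) (i j : n) : backCirculant v i j = v (i + j) :=
  rfl

@[simp]
theorem transpose_backCirculant [AddCommMagma n] (v : n → α) :
    (backCirculant v)ᵀ = backCirculant v := by
  ext i j
  simp [backCirculant_apply, add_comm]

section Products

variable [CommSemiring α] [Fintype n] [AddCommGroup n]

theorem circulant_mulVec_comm (v w : n → α) : circulant v *ᵥ w = circulant w *ᵥ v :=
  circulant_injective <| by rw [← circulant_mul, ← circulant_mul, circulant_mul_comm]

theorem circulant_mul_transpose_circulant (v w : n → α) :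
    circulant v * (circulant w)ᵀ = circulant (circulant v *ᵥ fun i => w (-i)) := by
  rw [transpose_circulant, circulant_mul]

theorem circulant_mul_transpose_circulant_apply (v w : n → α) (i j : n) :
    (circulant v * (circulant w)ᵀ) i j = ∑ k, v (k + (i - j)) * w k := by
  simp only [mul_apply, transpose_apply, circulant_apply]
  exact Fintype.sum_equiv (Equiv.subLeft j) _ _ fun k => by
    simp only [Equiv.subLeft_apply]; congr 2; abel

theorem backCirculant_mul_backCirculant (v w : n → α) :
    backCirculant v * backCirculant w = circulant (circulant v *ᵥ fun i => w (-i)) := by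
  ext i j
  simp only [mul_apply, backCirculant_apply, circulant_apply, mulVec, dotProduct]
  exact Fintype.sum_equiv ((Equiv.addLeft i).trans (Equiv.subLeft (i - j))) _ _ fun k => by
    simp only [Equiv.trans_apply, Equiv.coe_addLeft, Equiv.subLeft_apply]; congr 2 <;> abel

theorem circulant_mul_backCirculant (v w : n → α) :
    circulant v * backCirculant w = backCirculant (circulant v *ᵥ w) := by
  ext i j
  simp only [mul_apply, backCirculant_apply, circulant_apply, mulVec, dotProduct]
  exact Fintype.sum_equiv (Equiv.addLeft j) _ _ fun k => by
    simp only [Equiv.coe_addLeft]; congr 2 <;> abel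

theorem backCirculant_mul_transpose_circulant (v w : n → α) :
    backCirculant v * (circulant w)ᵀ = backCirculant (circulant v *ᵥ w) := by
  rw [← transpose_backCirculant v, ← transpose_mul, circulant_mul_backCirculant,
    transpose_backCirculant, circulant_mulVec_comm]

end Products

end Matrix

section GoethalsSeidel

variable {n α : Type*}

/-- The Goethals–Seidel array `[A, BR, CR, DR; -BR, A, -DᵀR, CᵀR; -CR, DᵀR, A, -BᵀR;
-DR, -CᵀR, BᵀR, A]`, where `R` is the back-identity: `XR` is the back-circulant of `x` and
`XᵀR` that of `i ↦ x (-i)`. -/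
def goethalsSeidel [Neg α] [AddGroup n] (a : Fin 4 → n → α) :
    Matrix (Fin 4) (Fin 4) (Matrix n n α) :=
  let A := circulant (a 0)
  let B := backCirculant (a 1)
  let C := backCirculant (a 2)
  let D := backCirculant (a 3)
  let B' := backCirculant fun i => a 1 (-i)
  let C' := backCirculant fun i => a 2 (-i)
  let D' := backCirculant fun i => a 3 (-i)
  !![A, B, C, D; -B, A, -D', C'; -C, D', A, -B'; -D, -C', B', A]

theorem comp_goethalsSeidel_apply_eq_one_or_eq_neg_one [Ring α] [AddGroup n] (a : Fin 4 → n → α)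
    (ha : ∀ t u, a t u = 1 ∨ a t u = -1) (p q : Fin 4 × n) :
    comp _ _ _ _ _ (goethalsSeidel a) p q = 1 ∨ comp _ _ _ _ _ (goethalsSeidel a) p q = -1 := by
  have ha_neg : ∀ t u, -a t u = 1 ∨ -a t u = -1 := fun t u => by
    rcases ha t u with h | h <;> simp [h]
  obtain ⟨i, x⟩ := p
  obtain ⟨j, y⟩ := q
  fin_cases i <;> fin_cases j <;>
    simp only [goethalsSeidel, comp_apply, of_apply, cons_val', cons_val_zero, cons_val_one,
      cons_val_two, cons_val_three, empty_val', cons_val_fin_one, head_cons, tail_cons,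
      Fin.zero_eta, Fin.mk_one, Fin.reduceFinMk, circulant_apply, backCirculant_apply]
  all_goals first | exact ha _ _ | exact ha_neg _ _

variable [Fintype n] [AddCommGroup n]

theorem goethalsSeidel_mul_blockTranspose [CommRing α] [DecidableEq n] (a : Fin 4 → n → α) :
    goethalsSeidel a * (goethalsSeidel a)ᵀ.map (·ᵀ) =
      diagonal fun _ => ∑ t, circulant (a t) * (circulant (a t))ᵀ := by
  ext1 i j
  fin_cases i <;> fin_cases j <;>
    simp [goethalsSeidel, mul_apply, Fin.sum_univ_four, circulant_mul_transpose_circulant,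
      backCirculant_mul_backCirculant, circulant_mul_backCirculant,
      backCirculant_mul_transpose_circulant, circulant_mulVec_comm]
  all_goals abel

theorem comp_goethalsSeidel_mul_transpose [CommRing α] [DecidableEq n] (a : Fin 4 → n → α)
    (c : α) (ha : ∑ t, circulant (a t) * (circulant (a t))ᵀ = c • 1) :
    comp _ _ _ _ _ (goethalsSeidel a) * (comp _ _ _ _ _ (goethalsSeidel a))ᵀ = c • 1 := by
  rw [transpose_comp, ← compRingEquiv_apply, ← compRingEquiv_apply, ← map_mul,
    compRingEquiv_apply, goethalsSeidel_mul_blockTranspose, ha]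
  ext ⟨i, x⟩ ⟨j, y⟩
  by_cases hij : i = j <;> simp [hij, one_apply, Prod.ext_iff]

end GoethalsSeidel

section SignSequences

variable {n : Type*}

def pmIndicator [DecidableEq n] (X : Finset n) (u : n) : ℤ := if u ∈ X then -1 else 1

theorem pmIndicator_eq_one_or_eq_neg_one [DecidableEq n] (X : Finset n) (u : n) :
    pmIndicator X u = 1 ∨ pmIndicator X u = -1 := by
  unfold pmIndicator; split_ifs <;> simp

variable [AddCommGroup n] [Fintype n] [DecidableEq n]

theorem card_filter_product_sub_eq (X : Finset n) (s : n) :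
    #{p ∈ X ×ˢ X | p.1 - p.2 = s} = #{u | u ∈ X ∧ u + s ∈ X} := by
  refine card_nbij' Prod.snd (fun u => (u + s, u)) ?_ ?_ ?_ ?_ <;> intro p hp <;>
    simp only [coe_filter, mem_product, Set.mem_ofPred_eq, mem_univ, true_and] at hp ⊢
  · obtain ⟨⟨h1, h2⟩, rfl⟩ := hp; simpa using And.intro h2 h1
  · simpa [and_comm] using hp
  · obtain ⟨⟨h1, h2⟩, rfl⟩ := hp; simp

theorem sum_pmIndicator_mul_pmIndicator (X : Finset n) (s : n) :
    ∑ u, pmIndicator X (u + s) * pmIndicator X u =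
      Fintype.card n - 4 * #X + 4 * #{p ∈ X ×ˢ X | p.1 - p.2 = s} := by
  have expand : ∀ u, pmIndicator X (u + s) * pmIndicator X u =
      1 - 2 * (if u + s ∈ X then 1 else 0) - 2 * (if u ∈ X then 1 else 0) +
        4 * (if u ∈ X ∧ u + s ∈ X then 1 else 0) := by
    intro u; unfold pmIndicator; split_ifs <;> simp_all
  have shift : ∑ u, (if u + s ∈ X then (1 : ℤ) else 0) = ∑ u, if u ∈ X then 1 else 0 :=
    Fintype.sum_equiv (Equiv.addRight s) _ _ fun _ => rfl
  simp only [expand, sum_add_distrib, sum_sub_distrib, ← mul_sum, shift, sum_boole,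
    card_filter_product_sub_eq, filter_mem_eq_inter, univ_inter, sum_const, card_univ, nsmul_eq_mul]
  ring

end SignSequences

theorem sum_autocorrelation_pmIndicator_of_isSDS {v : ℕ} [NeZero v]
    (X : Fin 4 → Finset (ZMod v)) (k : Fin 4 → ℕ) (lam : ℕ)
    (hlam : (lam : ℤ) = (∑ i, (k i : ℤ)) - v) (h : IsSDS X k lam) (s : ZMod v) :
    ∑ t, ∑ u, pmIndicator (X t) (u + s) * pmIndicator (X t) u = if s = 0 then 4 * v else 0 := by
  split_ifs with hs
  · have sq : ∀ t u, pmIndicator (X t) u * pmIndicator (X t) u = 1 := fun t u => by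
      rcases pmIndicator_eq_one_or_eq_neg_one (X t) u with h | h <;> simp [h]
    subst hs
    simp [sq, ZMod.card]
  · have hcount := congrArg (Nat.cast : ℕ → ℤ) (h.2 s hs)
    push_cast at hcount
    simp only [sum_pmIndicator_mul_pmIndicator, h.1, sum_add_distrib, sum_sub_distrib, ← mul_sum,
      hcount, hlam, ZMod.card, sum_const, card_univ, Fintype.card_fin, nsmul_eq_mul]
    ring

theorem sum_circulant_pmIndicator_mul_transpose_of_isSDS {v : ℕ} [NeZero v]
    (X : Fin 4 → Finset (ZMod v)) (k : Fin 4 → ℕ) (lam : ℕ)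
    (hlam : (lam : ℤ) = (∑ i, (k i : ℤ)) - v) (h : IsSDS X k lam) :
    ∑ t, circulant (pmIndicator (X t)) * (circulant (pmIndicator (X t)))ᵀ =
      (4 * v : ℤ) • (1 : Matrix (ZMod v) (ZMod v) ℤ) := by
  ext x y
  rw [Matrix.sum_apply]
  simp only [circulant_mul_transpose_circulant_apply,
    sum_autocorrelation_pmIndicator_of_isSDS X k lam hlam h, sub_eq_zero]
  by_cases hxy : x = y <;> simp [hxy]

theorem stmt4 {v : ℕ} (hv : 1 ≤ v)
    (X : Fin 4 → Finset (ZMod v)) (k : Fin 4 → ℕ) (lam : ℕ)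
    (hlam : (lam : ℤ) = (∑ i, (k i : ℤ)) - v)
    (h : IsSDS X k lam) :
    ∃ H : Matrix (Fin (4 * v)) (Fin (4 * v)) ℤ,
      (∀ i j, H i j = 1 ∨ H i j = -1) ∧
      H * Hᵀ = (4 * v : ℤ) • (1 : Matrix (Fin (4 * v)) (Fin (4 * v)) ℤ) := by
  have : NeZero v := ⟨by omega⟩
  let a t := pmIndicator (X t)
  let H := comp _ _ _ _ _ (goethalsSeidel a)
  let e : Fin (4 * v) ≃ Fin 4 × ZMod v := Fintype.equivOfCardEq (by simp [ZMod.card])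
  have hH : H * Hᵀ = (4 * v : ℤ) • 1 := comp_goethalsSeidel_mul_transpose a _
    (sum_circulant_pmIndicator_mul_transpose_of_isSDS X k lam hlam h)
  refine ⟨H.submatrix e e, fun i j => ?_, ?_⟩
  · exact comp_goethalsSeidel_apply_eq_one_or_eq_neg_one a
      (fun t => pmIndicator_eq_one_or_eq_neg_one (X t)) _ _
  · rw [transpose_submatrix, submatrix_mul_equiv, hH]
    ext i j
    simp only [submatrix_apply, Matrix.smul_apply, one_apply, e.injective.eq_iff]
end

section
/- Let v be an odd positive integer and suppose there exist subsets X₁, X₂, X₃, X₄ of ℤ/vℤ forming supplementary difference sets with parameters (v; k₁, k₂, k₃, k₄; λ) where λ = k₁ + k₂ + k₃ + k₄ − v, such that X₁ is a skew subset of ℤ/vℤ, i.e., for each nonzero i ∈ ℤ/vℤ exactly one of i and v − i belongs to X₁. Then there exists a skew-Hadamard matrix of order 4v, i.e., a Hadamard matrix H of order 4v satisfying H + Hᵀ = 2·I_{4v}. -/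
/-!
Replace each `Xᵢ` by its `±1` sequence `aᵢ` (`-1` on `Xᵢ`). Since
`∑ₘ aᵢ(m) aᵢ(m - c) = v - 4kᵢ + 4 #{(x, y) ∈ Xᵢ² | x - y = c}`, the condition
`λ = k₁ + k₂ + k₃ + k₄ - v` says exactly that the periodic autocorrelations of `a₁, …, a₄` sum
to `0` at every nonzero shift, and skewness of `X₁` gives `a₁(-c) = -a₁(c)` for `c ≠ 0`.
Feeding the circulant of `a₁` and back-circulants of `a₂, a₃, a₄` into the Goethals–Seidel array
gives a `±1` matrix `H` for which `H Hᵀ` is block diagonal with the circulant of the summed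
autocorrelations, i.e. `4v I`, on the diagonal, and `H + Hᵀ` is block diagonal with the circulant
of `c ↦ a₁(c) + a₁(-c) = 2 δ₀` (once `a₁(0) = 1`, which a global sign change arranges).
-/

open Matrix

open Finset

def IsSkewHadamard {ι : Type*} [Fintype ι] [DecidableEq ι] (H : Matrix ι ι ℤ) : Prop :=
  (∀ i j, H i j = 1 ∨ H i j = -1) ∧ H * Hᵀ = (Fintype.card ι : ℤ) • 1 ∧ H + Hᵀ = (2 : ℤ) • 1

lemma IsSkewHadamard.reindex {ι κ : Type*} [Fintype ι] [DecidableEq ι] [Fintype κ]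
    [DecidableEq κ] {H : Matrix ι ι ℤ} (hH : IsSkewHadamard H) (e : ι ≃ κ) :
    IsSkewHadamard (reindex e e H) := by
  obtain ⟨hpm, hmul, hadd⟩ := hH
  refine ⟨fun i j => hpm _ _, ?_, ?_⟩
  · rw [reindex_apply, transpose_submatrix, submatrix_mul_equiv, hmul, ← Fintype.card_congr e]
    ext i j
    simp only [submatrix_apply, Matrix.smul_apply, one_apply, e.symm.injective.eq_iff]
  · ext i j
    simpa only [Matrix.add_apply, transpose_apply, reindex_apply, submatrix_apply,
      Matrix.smul_apply, one_apply, e.symm.injective.eq_iff]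
      using congrFun₂ hadd (e.symm i) (e.symm j)

namespace GoethalsSeidel

section Array

variable {G R : Type*} [AddCommGroup G] [CommRing R]

def reflect (f : G → R) (t : G) : R := f (-t)

def backCirculant (f : G → R) : Matrix G G R := of fun x y => f (x + y)

omit [CommRing R] in
@[simp]
lemma backCirculant_apply (f : G → R) (x y : G) : backCirculant f x y = f (x + y) := rfl

omit [CommRing R] in
@[simp]
lemma transpose_backCirculant (f : G → R) : (backCirculant f)ᵀ = backCirculant f := by
  ext x y; simp [backCirculant, add_comm]

/-- With `P` the permutation matrix of `x ↦ -x`, `backCirculant g = circulant g * P` and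
`backCirculant (reflect g) = (circulant g)ᵀ * P`, so this is the Goethals–Seidel array
`[A, BP, CP, DP; -BP, A, -DᵀP, CᵀP; -CP, DᵀP, A, -BᵀP; -DP, -CᵀP, BᵀP, A]`. -/
def gsArray (f : Fin 4 → G → R) : Matrix (Fin 4) (Fin 4) (Matrix G G R) :=
  !![circulant (f 0), backCirculant (f 1), backCirculant (f 2), backCirculant (f 3);
    -backCirculant (f 1), circulant (f 0), -backCirculant (reflect (f 3)),
      backCirculant (reflect (f 2));
    -backCirculant (f 2), backCirculant (reflect (f 3)), circulant (f 0),
      -backCirculant (reflect (f 1));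
    -backCirculant (f 3), -backCirculant (reflect (f 2)), backCirculant (reflect (f 1)),
      circulant (f 0)]

lemma gsArray_add_blockTranspose (f : Fin 4 → G → R) :
    gsArray f + (gsArray f)ᵀ.map transpose =
      diagonal fun _ => circulant (f 0) + (circulant (f 0))ᵀ := by
  ext1 a b
  fin_cases a <;> fin_cases b <;> simp [gsArray]

end Array

section Correlation

variable {G R : Type*} [AddCommGroup G] [Fintype G] [CommRing R]

def corr (f g : G → R) (c : G) : R := ∑ w, f w * g (w - c)

def conv (f g : G → R) (s : G) : R := ∑ w, f w * g (s - w)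

lemma conv_comm (f g : G → R) : conv f g = conv g f := by
  funext s
  refine Fintype.sum_equiv (Equiv.subLeft s) _ _ fun w => ?_
  simp [mul_comm]

lemma corr_smul_smul (a b : R) (f g : G → R) : corr (a • f) (b • g) = (a * b) • corr f g := by
  funext c
  simp only [corr, Pi.smul_apply, smul_eq_mul, mul_sum]
  exact sum_congr rfl fun w _ => by ring

@[simp]
lemma corr_reflect_right (f g : G → R) : corr f (reflect g) = conv f g := by
  funext c
  simp [corr, conv, reflect]

@[simp]
lemma corr_reflect_left (f g : G → R) : corr (reflect f) g = reflect (conv f g) := by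
  funext c
  refine Fintype.sum_equiv (Equiv.neg _) _ _ fun w => ?_
  simp [reflect, sub_eq_add_neg, add_comm]

@[simp]
lemma conv_reflect_left (f g : G → R) : conv (reflect f) g = corr g f := by
  funext s
  refine Fintype.sum_equiv (Equiv.subLeft s) _ _ fun w => ?_
  simp [reflect, mul_comm]

@[simp]
lemma conv_reflect_right (f g : G → R) : conv f (reflect g) = corr f g := by
  funext s
  simp [conv, corr, reflect]

@[simp]
lemma circulant_mul_transpose_circulant (f g : G → R) :
    circulant f * (circulant g)ᵀ = circulant (corr f g) := by
  ext x y
  refine Fintype.sum_equiv (Equiv.subLeft x) _ _ fun z => ?_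
  simp [sub_sub_sub_cancel_left]

@[simp]
lemma backCirculant_mul_backCirculant (f g : G → R) :
    backCirculant f * backCirculant g = circulant (corr f g) := by
  ext x y
  refine Fintype.sum_equiv (Equiv.addLeft x) _ _ fun z => ?_
  simp only [backCirculant_apply, Equiv.coe_addLeft]
  congr 2; abel

@[simp]
lemma circulant_mul_backCirculant (f g : G → R) :
    circulant f * backCirculant g = backCirculant (conv f g) := by
  ext x y
  refine Fintype.sum_equiv (Equiv.subLeft x) _ _ fun z => ?_
  simp only [backCirculant_apply, circulant_apply, Equiv.subLeft_apply]
  congr 2; abel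

@[simp]
lemma backCirculant_mul_transpose_circulant (f g : G → R) :
    backCirculant g * (circulant f)ᵀ = backCirculant (conv f g) := by
  ext x y
  refine Fintype.sum_equiv (Equiv.subLeft y) _ _ fun z => ?_
  simp only [backCirculant_apply, transpose_apply, circulant_apply, Equiv.subLeft_apply]
  rw [mul_comm]
  congr 2; abel

lemma gsArray_mul_blockTranspose (f : Fin 4 → G → R) :
    gsArray f * (gsArray f)ᵀ.map transpose =
      diagonal fun _ => circulant (∑ i, corr (f i) (f i)) := by
  ext1 a b
  fin_cases a <;> fin_cases b <;>
    simp [gsArray, mul_apply, Fin.sum_univ_four, circulant_add, conv_comm] <;> abel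

lemma corr_self_zero_of_mul_self_eq_one {f : G → R} (hf : ∀ w, f w * f w = 1) :
    corr f f 0 = Fintype.card G := by
  simp [corr, hf]

lemma comp_diagonal_circulant_single {ι : Type*} [DecidableEq ι] [DecidableEq G] (a : R) :
    comp ι ι G G R (diagonal fun _ => circulant (Pi.single 0 a)) = a • 1 := by
  simp only [circulant_single, scalar_apply, smul_one_eq_diagonal]
  exact comp_diagonal_diagonal _

end Correlation

lemma abs_gsArray_apply {G : Type*} [AddCommGroup G] {f : Fin 4 → G → ℤ}
    (hf : ∀ i w, |f i w| = 1) (a b : Fin 4) (x y : G) : |gsArray f a b x y| = 1 := by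
  fin_cases a <;> fin_cases b <;>
    simp only [gsArray, Fin.zero_eta, Fin.mk_one, Fin.reduceFinMk, of_apply, Matrix.cons_val,
      Matrix.neg_apply, abs_neg, circulant_apply, backCirculant_apply, reflect, hf]

theorem isSkewHadamard_comp_gsArray {G : Type*} [AddCommGroup G] [Fintype G] [DecidableEq G]
    (f : Fin 4 → G → ℤ) (hf : ∀ i w, |f i w| = 1)
    (hcorr : ∀ c ≠ 0, ∑ i, corr (f i) (f i) c = 0) (h00 : f 0 0 = 1)
    (hskew : ∀ c ≠ 0, f 0 (-c) = -f 0 c) :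
    IsSkewHadamard (comp _ _ _ _ ℤ (gsArray f)) := by
  have hsum : ∑ i, corr (f i) (f i) = Pi.single (0 : G) (Fintype.card (Fin 4 × G) : ℤ) := by
    funext c
    rcases eq_or_ne c 0 with rfl | hc
    · have hsq : ∀ i w, f i w * f i w = 1 := fun i w => by rw [← abs_mul_abs_self, hf, one_mul]
      simp [Finset.sum_apply, corr_self_zero_of_mul_self_eq_one (hsq _)]
    · simp [Finset.sum_apply, hc, hcorr c hc]
  have hsym : f 0 + (fun c => f 0 (-c)) = Pi.single (0 : G) 2 := by
    funext c
    rcases eq_or_ne c 0 with rfl | hc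
    · simp [h00]
    · simp [hc, hskew c hc]
  refine ⟨fun p q => (abs_eq zero_le_one).mp (abs_gsArray_apply hf _ _ _ _), ?_, ?_⟩
  · rw [transpose_comp, ← compRingEquiv_apply, ← compRingEquiv_apply, ← map_mul,
      compRingEquiv_apply, gsArray_mul_blockTranspose, hsum, comp_diagonal_circulant_single]
  · rw [transpose_comp, ← compAddEquiv_apply, ← compAddEquiv_apply, ← map_add,
      compAddEquiv_apply, gsArray_add_blockTranspose, transpose_circulant, ← circulant_add,
      hsym, comp_diagonal_circulant_single]

end GoethalsSeidel

open GoethalsSeidel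

section SignSequence

variable {G : Type*} [DecidableEq G]

def signSeq (X : Finset G) (w : G) : ℤ := if w ∈ X then -1 else 1

lemma abs_signSeq (X : Finset G) (w : G) : |signSeq X w| = 1 := by
  unfold signSeq; split_ifs <;> norm_num

variable [AddCommGroup G]

lemma signSeq_neg_of_xor {X : Finset G} (hX : ∀ i, i ≠ 0 → Xor (i ∈ X) (-i ∈ X)) {c : G}
    (hc : c ≠ 0) : signSeq X (-c) = -signSeq X c := by
  rcases hX c hc with ⟨h1, h2⟩ | ⟨h1, h2⟩ <;> simp [signSeq, h1, h2]

lemma card_filter_sub_mem_s5 (X : Finset G) (c : G) :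
    #{w ∈ X | w - c ∈ X} = #{p ∈ X ×ˢ X | p.1 - p.2 = c} := by
  refine card_nbij' (fun w => (w, w - c)) Prod.fst ?_ ?_ ?_ ?_
  · intro w hw
    simp_all
  · intro p hp
    simp only [coe_filter, mem_product, Set.mem_ofPred_eq] at hp ⊢
    rw [← hp.2, sub_sub_cancel]
    exact ⟨hp.1.1, hp.1.2⟩
  · intro w _; rfl
  · intro p hp
    simp only [coe_filter, mem_product, Set.mem_ofPred_eq] at hp
    ext <;> simp [← hp.2]

lemma corr_signSeq [Fintype G] (X : Finset G) (c : G) :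
    corr (signSeq X) (signSeq X) c =
      Fintype.card G - 4 * #X + 4 * #{p ∈ X ×ˢ X | p.1 - p.2 = c} := by
  have hshift : ∑ w, (if w - c ∈ X then (1 : ℤ) else 0) = #X := by
    refine ((Equiv.subRight c).sum_comp fun w => if w ∈ X then (1 : ℤ) else 0).trans ?_
    rw [sum_boole, filter_univ_mem]
  have hboth : ∑ w, (if w ∈ X ∧ w - c ∈ X then (1 : ℤ) else 0) =
      #{p ∈ X ×ˢ X | p.1 - p.2 = c} := by
    rw [sum_boole, ← filter_filter, filter_univ_mem, card_filter_sub_mem_s5]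
  have hpoint : ∀ w, signSeq X w * signSeq X (w - c) =
      1 - 2 * (if w ∈ X then 1 else 0) - 2 * (if w - c ∈ X then 1 else 0)
        + 4 * (if w ∈ X ∧ w - c ∈ X then 1 else 0) := by
    intro w; unfold signSeq; split_ifs <;> simp_all
  simp only [corr, hpoint, sum_add_distrib, sum_sub_distrib, ← mul_sum, hshift, hboth,
    sum_boole, filter_univ_mem, sum_const, card_univ, nsmul_eq_mul, mul_one]
  ring

lemma IsSDS.sum_corr_signSeq {v t : ℕ} [NeZero v] {X : Fin t → Finset (ZMod v)} {k : Fin t → ℕ}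
    {lam : ℕ} (h : IsSDS X k lam) {c : ZMod v} (hc : c ≠ 0) :
    ∑ i, corr (signSeq (X i)) (signSeq (X i)) c = t * v - 4 * ∑ i, (k i : ℤ) + 4 * lam := by
  have hN : ∑ i, (#{p ∈ X i ×ˢ X i | p.1 - p.2 = c} : ℤ) = lam := by exact_mod_cast h.2 c hc
  simp only [corr_signSeq, sum_add_distrib, sum_sub_distrib, ← mul_sum,
    sum_const, card_univ, ZMod.card, Fintype.card_fin, h.1, hN, nsmul_eq_mul]

end SignSequence

theorem stmt5_general {v : ℕ} (hv : 0 < v)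
    (X : Fin 4 → Finset (ZMod v)) (k : Fin 4 → ℕ) (lam : ℕ)
    (hlam : (lam : ℤ) = (∑ i, (k i : ℤ)) - v)
    (h : IsSDS X k lam)
    (hskew : ∀ i : ZMod v, i ≠ 0 → Xor' (i ∈ X 0) (-i ∈ X 0)) :
    ∃ H : Matrix (Fin (4 * v)) (Fin (4 * v)) ℤ,
      (∀ i j, H i j = 1 ∨ H i j = -1) ∧
      H * Hᵀ = (4 * v : ℤ) • (1 : Matrix (Fin (4 * v)) (Fin (4 * v)) ℤ) ∧
      H + Hᵀ = (2 : ℤ) • (1 : Matrix (Fin (4 * v)) (Fin (4 * v)) ℤ) := by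
  have : NeZero v := ⟨hv.ne'⟩
  -- scaling every sequence by `s = ±1` keeps the correlations and makes the first one `1` at `0`
  set s := signSeq (X 0) 0
  have hs₁ : |s| = 1 := abs_signSeq _ _
  have hs : s * s = 1 := by rw [← abs_mul_abs_self, hs₁, one_mul]
  let f : Fin 4 → ZMod v → ℤ := fun i => s • signSeq (X i)
  have hH : IsSkewHadamard (comp _ _ _ _ ℤ (gsArray f)) := by
    refine isSkewHadamard_comp_gsArray f (fun i w => ?_) (fun c hc => ?_) hs (fun c hc => ?_)
    · simp [f, abs_mul, abs_signSeq, hs₁]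
    · simp only [f, corr_smul_smul, hs, one_smul, h.sum_corr_signSeq hc, hlam]
      push_cast
      ring
    · simp [f, signSeq_neg_of_xor hskew hc]
  obtain ⟨hpm, hmul, hadd⟩ :=
    hH.reindex (Fintype.equivFinOfCardEq (by simp [ZMod.card]) : Fin 4 × ZMod v ≃ Fin (4 * v))
  exact ⟨_, hpm, by simpa using hmul, hadd⟩

theorem stmt5 {v : ℕ} (hv : 0 < v) (hvodd : Odd v)
    (X : Fin 4 → Finset (ZMod v)) (k : Fin 4 → ℕ) (lam : ℕ)
    (hlam : (lam : ℤ) = (∑ i, (k i : ℤ)) - v)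
    (h : IsSDS X k lam)
    (hskew : ∀ i : ZMod v, i ≠ 0 → Xor' (i ∈ X 0) (-i ∈ X 0)) :
    ∃ H : Matrix (Fin (4 * v)) (Fin (4 * v)) ℤ,
      (∀ i j, H i j = 1 ∨ H i j = -1) ∧
      H * Hᵀ = (4 * v : ℤ) • (1 : Matrix (Fin (4 * v)) (Fin (4 * v)) ℤ) ∧
      H + Hᵀ = (2 : ℤ) • (1 : Matrix (Fin (4 * v)) (Fin (4 * v)) ℤ) :=
  stmt5_general hv X k lam hlam h hskew
end
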